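/- Let R be a Γ-graded ring and M a Γ-graded right R-module. Then M is gr-noetherian (resp. gr-artinian) if and only if M is Γ0-noetherian (resp. Γ0-artinian) and the set Γ'₀(M) = {e ∈ Γ₀ : M(e) ≠ 0} is finite. -/

import Mathlib

open CategoryTheory

universe u

instance addSubgroupNormalOfComm {M : Type*} [AddCommGroup M] (N : AddSubgroup M) :
    N.Normal := ⟨fun n hn g => by simpa [add_comm] using hn⟩

variable {Γ : Type u} [Groupoid.{u} Γ]

/-- The morphisms of the groupoid `Γ`, bundled together with their endpoints.
For `γ : GrIdx Γ`, the morphism `γ.2.2 : γ.1 ⟶ γ.2.1` has domain `d(γ) = γ.1`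
and range `r(γ) = γ.2.1`. -/
abbrev GrIdx (Γ : Type u) [Groupoid.{u} Γ] : Type u := Σ e f : Γ, e ⟶ f

/-- The data of a `Γ`-grading, a multiplication, and local units `1_e` on an
additive group `R`. -/
structure GRingData (Γ : Type u) [Groupoid.{u} Γ] (R : Type u) [AddCommGroup R] :
    Type u where
  mul : R → R → R
  component : ∀ {e f : Γ}, (e ⟶ f) → AddSubgroup R
  one : Γ → R

/-- The data of a right scalar multiplication by `R` and a `Γ`-grading on an
additive group `M`. -/
structure GModData (Γ : Type u) [Groupoid.{u} Γ] (R : Type u) (M : Type u)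
    [AddCommGroup M] : Type u where
  smul : M → R → M
  component : ∀ {e f : Γ}, (e ⟶ f) → AddSubgroup M

namespace GRingData

variable {R : Type u} [AddCommGroup R]

/-- `𝒜` makes `R` an (object unital) `Γ`-graded ring: `R` is an associative ring,
`R = ⊕_γ R_γ`, `R_γ R_δ ⊆ R_{γδ}` when `γδ` is defined and `R_γ R_δ = 0` otherwise,
each `R_e` (`e ∈ Γ₀`) is unital with identity `1_e`, and
`1_{r(γ)} a = a 1_{d(γ)} = a` for all `a ∈ R_γ`. -/
structure IsObjectUnital (𝒜 : GRingData Γ R) : Prop where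
  mul_assoc : ∀ a b c : R, 𝒜.mul (𝒜.mul a b) c = 𝒜.mul a (𝒜.mul b c)
  left_distrib : ∀ a b c : R, 𝒜.mul a (b + c) = 𝒜.mul a b + 𝒜.mul a c
  right_distrib : ∀ a b c : R, 𝒜.mul (a + b) c = 𝒜.mul a c + 𝒜.mul b c
  decompose : ∀ x : R, ∃ (s : Finset (GrIdx Γ)) (cf : GrIdx Γ → R),
      (∀ γ ∈ s, cf γ ∈ 𝒜.component γ.2.2) ∧ x = ∑ γ ∈ s, cf γ
  independent : ∀ (s : Finset (GrIdx Γ)) (cf : GrIdx Γ → R),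
      (∀ γ ∈ s, cf γ ∈ 𝒜.component γ.2.2) → ∑ γ ∈ s, cf γ = 0 → ∀ γ ∈ s, cf γ = 0
  mul_mem : ∀ {e f g : Γ} (γ : e ⟶ f) (δ : g ⟶ e) {a b : R},
      a ∈ 𝒜.component γ → b ∈ 𝒜.component δ → 𝒜.mul a b ∈ 𝒜.component (δ ≫ γ)
  mul_eq_zero : ∀ {e f g h : Γ} (γ : e ⟶ f) (δ : g ⟶ h) {a b : R},
      h ≠ e → a ∈ 𝒜.component γ → b ∈ 𝒜.component δ → 𝒜.mul a b = 0
  one_mem : ∀ e : Γ, 𝒜.one e ∈ 𝒜.component (𝟙 e)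
  one_mul : ∀ {e f : Γ} (γ : e ⟶ f) {a : R}, a ∈ 𝒜.component γ → 𝒜.mul (𝒜.one f) a = a
  mul_one : ∀ {e f : Γ} (γ : e ⟶ f) {a : R}, a ∈ 𝒜.component γ → 𝒜.mul a (𝒜.one e) = a

/-- `R` regarded as a (`Γ`-graded) right module over itself. -/
def toMod (𝒜 : GRingData Γ R) : GModData Γ R R where
  smul := 𝒜.mul
  component := fun γ => 𝒜.component γ

end GRingData

namespace GModData

variable {R : Type u} {M : Type u} {M' : Type u} [AddCommGroup M] [AddCommGroup M']

/-- `ℳ` makes `M` a unital `Γ`-graded right module over the `Γ`-graded ring `𝒜`: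
`M` is a right `R`-module, `M = ⊕_γ M_γ`, `M_σ R_τ ⊆ M_{στ}` when `στ` is defined
and `M_σ R_τ = 0` otherwise, and `m 1_{d(σ)} = m` for all `m ∈ M_σ`. -/
structure IsGraded [AddCommGroup R] (𝒜 : GRingData Γ R) (ℳ : GModData Γ R M) :
    Prop where
  add_smul : ∀ (m n : M) (a : R), ℳ.smul (m + n) a = ℳ.smul m a + ℳ.smul n a
  smul_add : ∀ (m : M) (a b : R), ℳ.smul m (a + b) = ℳ.smul m a + ℳ.smul m b
  smul_mul : ∀ (m : M) (a b : R), ℳ.smul m (𝒜.mul a b) = ℳ.smul (ℳ.smul m a) b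
  decompose : ∀ x : M, ∃ (s : Finset (GrIdx Γ)) (cf : GrIdx Γ → M),
      (∀ γ ∈ s, cf γ ∈ ℳ.component γ.2.2) ∧ x = ∑ γ ∈ s, cf γ
  independent : ∀ (s : Finset (GrIdx Γ)) (cf : GrIdx Γ → M),
      (∀ γ ∈ s, cf γ ∈ ℳ.component γ.2.2) → ∑ γ ∈ s, cf γ = 0 → ∀ γ ∈ s, cf γ = 0
  smul_mem : ∀ {e f g : Γ} (σ : e ⟶ f) (τ : g ⟶ e) {m : M} {a : R},
      m ∈ ℳ.component σ → a ∈ 𝒜.component τ → ℳ.smul m a ∈ ℳ.component (τ ≫ σ)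
  smul_eq_zero : ∀ {e f g h : Γ} (σ : e ⟶ f) (τ : g ⟶ h) {m : M} {a : R},
      h ≠ e → m ∈ ℳ.component σ → a ∈ 𝒜.component τ → ℳ.smul m a = 0
  smul_one : ∀ {e f : Γ} (σ : e ⟶ f) {m : M}, m ∈ ℳ.component σ →
      ℳ.smul m (𝒜.one e) = m

/-- An element of `M` is homogeneous if it belongs to some homogeneous component. -/
def IsHomogeneous (ℳ : GModData Γ R M) (m : M) : Prop :=
  ∃ (e f : Γ) (γ : e ⟶ f), m ∈ ℳ.component γ

/-- `N` is a graded submodule of `M`: a submodule (subgroup closed under the right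
`R`-action) generated by its homogeneous elements, i.e. `N = ⊕_γ (N ∩ M_γ)`. -/
def IsGrSub (ℳ : GModData Γ R M) (N : AddSubgroup M) : Prop :=
  (∀ m ∈ N, ∀ a : R, ℳ.smul m a ∈ N) ∧
  ∀ n ∈ N, n ∈ AddSubgroup.closure {x : M | x ∈ N ∧ ℳ.IsHomogeneous x}

/-- `M` is gr-noetherian: there is no strictly increasing infinite chain of graded
submodules. -/
def GrNoetherian (ℳ : GModData Γ R M) : Prop :=
  ¬ ∃ c : ℕ → AddSubgroup M, (∀ n, ℳ.IsGrSub (c n)) ∧ ∀ n, c n < c (n + 1)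

/-- `M` is gr-artinian: there is no strictly decreasing infinite chain of graded
submodules. -/
def GrArtinian (ℳ : GModData Γ R M) : Prop :=
  ¬ ∃ c : ℕ → AddSubgroup M, (∀ n, ℳ.IsGrSub (c n)) ∧ ∀ n, c (n + 1) < c n

/-- The `R`-submodule of `M` generated by a set `X`. -/
def rClosure (ℳ : GModData Γ R M) (X : Set M) : AddSubgroup M :=
  sInf {N : AddSubgroup M | X ⊆ N ∧ ∀ m ∈ N, ∀ a : R, ℳ.smul m a ∈ N}

/-- `M` is finitely generated (as a right `R`-module). -/
def FG (ℳ : GModData Γ R M) : Prop := ∃ s : Finset M, ℳ.rClosure ↑s = ⊤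

/-- The submodule `N` of `M` is finitely generated. -/
def FGSub (ℳ : GModData Γ R M) (N : AddSubgroup M) : Prop :=
  ∃ s : Finset M, ↑s ⊆ (N : Set M) ∧ ℳ.rClosure ↑s = N

/-- `M` is finitely gr-cogenerated: every family of graded submodules with zero
intersection has a finite subfamily with zero intersection. -/
def FinGrCogenerated (ℳ : GModData Γ R M) : Prop :=
  ∀ S : Set (AddSubgroup M), (∀ N ∈ S, ℳ.IsGrSub N) → sInf S = ⊥ →
    ∃ t : Finset (AddSubgroup M), ↑t ⊆ S ∧ t.inf id = ⊥

/-- The quotient module `M/N`, with grading `(M/N)_γ = (M_γ + N)/N`. -/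
noncomputable def quot (ℳ : GModData Γ R M) (N : AddSubgroup M) :
    GModData Γ R (M ⧸ N) where
  smul x a := QuotientAddGroup.mk (ℳ.smul (Quotient.out x) a)
  component := fun γ => (ℳ.component γ).map (QuotientAddGroup.mk' N)

open scoped Classical in
/-- The submodule `N`, regarded as a `Γ`-graded right `R`-module. -/
noncomputable def restrict (ℳ : GModData Γ R M) (N : AddSubgroup M) :
    GModData Γ R ↥N where
  smul m a := if h : ℳ.smul (↑m) a ∈ N then ⟨ℳ.smul (↑m) a, h⟩ else 0
  component := fun γ => (ℳ.component γ).addSubgroupOf N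

/-- The subquotient module `P/N` (for `N ≤ P` graded submodules of `M`). -/
noncomputable def subquot (ℳ : GModData Γ R M) (N P : AddSubgroup M) :
    GModData Γ R (↥P ⧸ N.addSubgroupOf P) :=
  (ℳ.restrict P).quot (N.addSubgroupOf P)

/-- `M(e) = ⊕_{r(γ) = e} M_γ`, for `e ∈ Γ₀`. -/
def part (ℳ : GModData Γ R M) (e : Γ) : AddSubgroup M :=
  ⨆ (f : Γ) (γ : f ⟶ e), ℳ.component γ

/-- `Γ'₀(M) = {e ∈ Γ₀ : M(e) ≠ 0}`. -/
def partSupport (ℳ : GModData Γ R M) : Set Γ := {e : Γ | ℳ.part e ≠ ⊥}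

/-- `M` is `Γ₀`-noetherian: `M(e)` is gr-noetherian for every `e ∈ Γ₀`. -/
def G0Noetherian (ℳ : GModData Γ R M) : Prop :=
  ∀ e : Γ, (ℳ.restrict (ℳ.part e)).GrNoetherian

/-- `M` is `Γ₀`-artinian: `M(e)` is gr-artinian for every `e ∈ Γ₀`. -/
def G0Artinian (ℳ : GModData Γ R M) : Prop :=
  ∀ e : Γ, (ℳ.restrict (ℳ.part e)).GrArtinian

/-- `M` is gr-simple: `M ≠ 0` and its only graded submodules are `0` and `M`. -/
def IsGrSimple (ℳ : GModData Γ R M) : Prop :=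
  (⊤ : AddSubgroup M) ≠ ⊥ ∧ ∀ N : AddSubgroup M, ℳ.IsGrSub N → N = ⊥ ∨ N = ⊤

/-- `N` is a gr-simple graded submodule of `M`. -/
def IsGrSimpleSub (ℳ : GModData Γ R M) (N : AddSubgroup M) : Prop :=
  ℳ.IsGrSub N ∧ N ≠ ⊥ ∧
    ∀ L : AddSubgroup M, ℳ.IsGrSub L → L ≤ N → L = ⊥ ∨ L = N

/-- `N` is a gr-maximal graded submodule of `M`. -/
def IsGrMaximalSub (ℳ : GModData Γ R M) (N : AddSubgroup M) : Prop :=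
  ℳ.IsGrSub N ∧ N ≠ ⊤ ∧
    ∀ L : AddSubgroup M, ℳ.IsGrSub L → N ≤ L → L = N ∨ L = ⊤

/-- The graded Jacobson radical of `M`: the intersection of all gr-maximal graded
submodules of `M` (equal to `M` when there are none). -/
def grRad (ℳ : GModData Γ R M) : AddSubgroup M := sInf {N | ℳ.IsGrMaximalSub N}

/-- The gr-socle of `M`: the sum of all gr-simple graded submodules of `M`
(equal to `0` when there are none). -/
def grSoc (ℳ : GModData Γ R M) : AddSubgroup M := sSup {N | ℳ.IsGrSimpleSub N}

/-- `N` is gr-superfluous in `M`. -/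
def GrSuperfluous (ℳ : GModData Γ R M) (N : AddSubgroup M) : Prop :=
  ∀ X : AddSubgroup M, ℳ.IsGrSub X → N ⊔ X = ⊤ → X = ⊤

/-- `N` is gr-essential in `M`. -/
def GrEssential (ℳ : GModData Γ R M) (N : AddSubgroup M) : Prop :=
  ∀ X : AddSubgroup M, ℳ.IsGrSub X → N ⊓ X = ⊥ → X = ⊥

/-- `M` is gr-semisimple: the sum of all gr-simple graded submodules is `M`. -/
def GrSemisimple (ℳ : GModData Γ R M) : Prop :=
  sSup {N : AddSubgroup M | ℳ.IsGrSimpleSub N} = ⊤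

/-- `c 0 = 0 ⊆ c 1 ⊆ ⋯ ⊆ c n = M` is a gr-composition series of `M` of length `n`. -/
def IsGrCompSeries (ℳ : GModData Γ R M) (n : ℕ) (c : ℕ → AddSubgroup M) : Prop :=
  c 0 = ⊥ ∧ c n = ⊤ ∧ (∀ i, i ≤ n → ℳ.IsGrSub (c i)) ∧
  (∀ i, i < n → c i ≤ c (i + 1)) ∧
  ∀ i, i < n → (ℳ.subquot (c i) (c (i + 1))).IsGrSimple

/-- `M` has finite gr-length: it admits a gr-composition series. -/
def FiniteGrLength (ℳ : GModData Γ R M) : Prop := ∃ n c, ℳ.IsGrCompSeries n c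

/-- `g : M → M'` is a gr-homomorphism of graded right `R`-modules. -/
def IsGrHom (ℳ : GModData Γ R M) (𝒩 : GModData Γ R M') (g : M → M') : Prop :=
  (∀ m n : M, g (m + n) = g m + g n) ∧
  (∀ (m : M) (a : R), g (ℳ.smul m a) = 𝒩.smul (g m) a) ∧
  ∀ (e f : Γ) (σ : e ⟶ f), ∀ m ∈ ℳ.component σ, g m ∈ 𝒩.component σ

/-- `M` and `M'` are gr-isomorphic (there is a bijective gr-homomorphism). -/
def GrIso (ℳ : GModData Γ R M) (𝒩 : GModData Γ R M') : Prop :=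
  ∃ g : M → M', IsGrHom ℳ 𝒩 g ∧ Function.Bijective g

/-- `g : M → M'` is a homomorphism of degree `γ` (where `γ : e ⟶ f`, i.e.
`d(γ) = e`): `g(M_σ) ⊆ M'_{γσ}` when `γσ` is defined and `g(M_σ) = 0` otherwise. -/
def IsHomOfDeg (ℳ : GModData Γ R M) (𝒩 : GModData Γ R M') {e f : Γ} (γ : e ⟶ f)
    (g : M → M') : Prop :=
  (∀ m n : M, g (m + n) = g m + g n) ∧
  (∀ (m : M) (a : R), g (ℳ.smul m a) = 𝒩.smul (g m) a) ∧
  (∀ (a : Γ) (σ : a ⟶ e), ∀ m ∈ ℳ.component σ, g m ∈ 𝒩.component (σ ≫ γ)) ∧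
  (∀ (a b : Γ) (σ : a ⟶ b), b ≠ e → ∀ m ∈ ℳ.component σ, g m = 0)

/-- `MJ`: the submodule of `M` consisting of finite sums of elements `m a`,
`m ∈ M`, `a ∈ J`. -/
def smulSet [AddCommGroup R] (ℳ : GModData Γ R M) (J : AddSubgroup R) : AddSubgroup M :=
  AddSubgroup.closure {x : M | ∃ (m : M) (a : R), a ∈ J ∧ x = ℳ.smul m a}

open scoped Classical in
/-- The direct sum `⊕_{j ∈ J} M_j` of graded right modules, with grading
`(⊕_j M_j)_γ = ⊕_j (M_j)_γ`. -/
noncomputable def dsum {J : Type u} {Mf : J → Type u} [∀ j, AddCommGroup (Mf j)]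
    (df : ∀ j, GModData Γ R (Mf j)) : GModData Γ R (Π₀ j, Mf j) where
  smul m a :=
    if h : ∃ y : Π₀ j, Mf j, ∀ j, y j = (df j).smul (m j) a then h.choose else 0
  component := fun γ => ⨅ j : J, ((df j).component γ).comap (DFinsupp.evalAddMonoidHom j)

/-- A descending chain of graded submodules is tight if
`Γ'₀(M_i/M_{i+1}) ⊇ Γ'₀(M_{i+1}/M_{i+2})` for all `i`. -/
def TightDesc (ℳ : GModData Γ R M) (c : ℕ → AddSubgroup M) : Prop :=
  (∀ i, ℳ.IsGrSub (c i)) ∧ (∀ i, c (i + 1) ≤ c i) ∧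
  ∀ i, (ℳ.subquot (c (i + 2)) (c (i + 1))).partSupport ⊆
    (ℳ.subquot (c (i + 1)) (c i)).partSupport

/-- An ascending chain of graded submodules is tight if
`Γ'₀(M_{i+1}/M_i) ⊇ Γ'₀(M_{i+2}/M_{i+1})` for all `i`. -/
def TightAsc (ℳ : GModData Γ R M) (c : ℕ → AddSubgroup M) : Prop :=
  (∀ i, ℳ.IsGrSub (c i)) ∧ (∀ i, c i ≤ c (i + 1)) ∧
  ∀ i, (ℳ.subquot (c (i + 1)) (c (i + 2))).partSupport ⊆
    (ℳ.subquot (c i) (c (i + 1))).partSupport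

/-- `M` is strongly `Γ₀`-artinian: every tight descending chain of graded
submodules stabilizes. -/
def StronglyG0Artinian (ℳ : GModData Γ R M) : Prop :=
  ∀ c : ℕ → AddSubgroup M, ℳ.TightDesc c → ∃ n, ∀ m, n ≤ m → c m = c n

/-- `M` is strongly `Γ₀`-noetherian: every tight ascending chain of graded
submodules stabilizes. -/
def StronglyG0Noetherian (ℳ : GModData Γ R M) : Prop :=
  ∀ c : ℕ → AddSubgroup M, ℳ.TightAsc c → ∃ n, ∀ m, n ≤ m → c m = c n

end GModData

/-- `E` is a gr-injective graded right `R`-module: for all graded right `R`-modules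
`M`, `N`, every injective gr-homomorphism `g : N → M` and every gr-homomorphism
`h : N → E`, there is a gr-homomorphism `h' : M → E` with `h' ∘ g = h`. -/
def GrInjective {R : Type u} [AddCommGroup R] (𝒜 : GRingData Γ R) {E : Type u}
    [AddCommGroup E] (ℰ : GModData Γ R E) : Prop :=
  ∀ (M N : Type u) [AddCommGroup M] [AddCommGroup N]
    (ℳ : GModData Γ R M) (𝒩 : GModData Γ R N),
    ℳ.IsGraded 𝒜 → 𝒩.IsGraded 𝒜 →
    ∀ g : N → M, GModData.IsGrHom 𝒩 ℳ g → Function.Injective g →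
    ∀ h : N → E, GModData.IsGrHom 𝒩 ℰ h →
    ∃ h' : M → E, GModData.IsGrHom ℳ ℰ h' ∧ ∀ y : N, h' (g y) = h y

/-- A bundled `Γ`-graded right module over the graded ring `𝒜`. -/
structure GrModule (Γ : Type u) [Groupoid.{u} Γ] {R : Type u} [AddCommGroup R]
    (𝒜 : GRingData Γ R) : Type (u + 1) where
  carrier : Type u
  [addCommGroup : AddCommGroup carrier]
  data : GModData Γ R carrier
  graded : data.IsGraded 𝒜

attribute [instance] GrModule.addCommGroup

namespace GRingData

variable {R : Type u} [AddCommGroup R]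

/-- `R` is right `Γ₀`-noetherian. -/
def RightG0Noetherian (𝒜 : GRingData Γ R) : Prop := 𝒜.toMod.G0Noetherian

/-- `R` is right `Γ₀`-artinian. -/
def RightG0Artinian (𝒜 : GRingData Γ R) : Prop := 𝒜.toMod.G0Artinian

/-- The principal right ideal `aR`. -/
def principal (𝒜 : GRingData Γ R) (a : R) : AddSubgroup R :=
  AddSubgroup.closure {x : R | ∃ b : R, x = 𝒜.mul a b}

/-- A gr-principal graded right ideal: one of the form `aR` with `a` homogeneous. -/
def IsGrPrincipal (𝒜 : GRingData Γ R) (N : AddSubgroup R) : Prop :=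
  ∃ a : R, 𝒜.toMod.IsHomogeneous a ∧ N = 𝒜.principal a

/-- `N` is a graded left ideal of `R`, i.e. a graded submodule of `_R R`. -/
def IsGrLeftIdeal (𝒜 : GRingData Γ R) (N : AddSubgroup R) : Prop :=
  (∀ m ∈ N, ∀ a : R, 𝒜.mul a m ∈ N) ∧
  ∀ n ∈ N, n ∈ AddSubgroup.closure {x : R | x ∈ N ∧ 𝒜.toMod.IsHomogeneous x}

/-- `N` is a gr-maximal graded left ideal of `R`. -/
def IsGrMaxLeftIdeal (𝒜 : GRingData Γ R) (N : AddSubgroup R) : Prop :=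
  𝒜.IsGrLeftIdeal N ∧ N ≠ ⊤ ∧
    ∀ L : AddSubgroup R, 𝒜.IsGrLeftIdeal L → N ≤ L → L = N ∨ L = ⊤

/-- The graded Jacobson radical of `R` as a left module over itself:
the intersection of all gr-maximal graded left ideals. -/
def lRad (𝒜 : GRingData Γ R) : AddSubgroup R := sInf {N | 𝒜.IsGrMaxLeftIdeal N}

/-- `N` is a graded (two-sided) ideal of `R`. -/
def IsGrIdeal (𝒜 : GRingData Γ R) (N : AddSubgroup R) : Prop :=
  𝒜.toMod.IsGrSub N ∧ ∀ m ∈ N, ∀ a : R, 𝒜.mul a m ∈ N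

/-- `N ⊆ R_e` is a left ideal of the unital ring `R_e`. -/
def IsLeftIdealIn (𝒜 : GRingData Γ R) (e : Γ) (N : Set R) : Prop :=
  N ⊆ (𝒜.component (𝟙 e) : Set R) ∧ (0 : R) ∈ N ∧
  (∀ a ∈ N, ∀ b ∈ N, a - b ∈ N) ∧
  ∀ r ∈ 𝒜.component (𝟙 e), ∀ a ∈ N, 𝒜.mul r a ∈ N

/-- `N` is a maximal left ideal of the unital ring `R_e`. -/
def IsMaxLeftIdealIn (𝒜 : GRingData Γ R) (e : Γ) (N : Set R) : Prop :=
  𝒜.IsLeftIdealIn e N ∧ N ≠ (𝒜.component (𝟙 e) : Set R) ∧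
  ∀ L : Set R, 𝒜.IsLeftIdealIn e L → N ⊆ L →
    L = N ∨ L = (𝒜.component (𝟙 e) : Set R)

/-- The Jacobson radical `rad(R_e)` of the unital ring `R_e`, as a subset of `R`:
the intersection of all maximal left ideals of `R_e`. -/
def radIn (𝒜 : GRingData Γ R) (e : Γ) : Set R :=
  (𝒜.component (𝟙 e) : Set R) ∩ ⋂₀ {N : Set R | 𝒜.IsMaxLeftIdealIn e N}

/-- The quotient graded ring `R/I` of `R` by a graded ideal `I`. -/
noncomputable def quotRing (𝒜 : GRingData Γ R) (I : AddSubgroup R) :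
    GRingData Γ (R ⧸ I) where
  mul x y := QuotientAddGroup.mk (𝒜.mul (Quotient.out x) (Quotient.out y))
  component := fun γ => (𝒜.component γ).map (QuotientAddGroup.mk' I)
  one e := QuotientAddGroup.mk (𝒜.one e)

/-- `R` is a gr-semisimple ring. -/
def GrSemisimpleRing (𝒜 : GRingData Γ R) : Prop := 𝒜.toMod.GrSemisimple

/-- `R` is gr-semilocal: the `Γ`-graded ring `R/rad^gr(R)` is gr-semisimple. -/
noncomputable def GrSemilocal (𝒜 : GRingData Γ R) : Prop :=
  ((𝒜.quotRing 𝒜.toMod.grRad).GrSemisimpleRing)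

end GRingData

/-!
A graded submodule `N` is generated by homogeneous elements, each lying in some `M(e)`, so
`N = ⊕_e (N ∩ M(e))`. Hence `N ↦ (N ∩ M(e))_e` is a strictly monotone map from the graded
submodules of `M` to the product, over the support, of the graded submodules of the `M(e)`; a
finite product of noetherian (artinian) posets is noetherian (artinian). Conversely, graded
submodules of `M(e)` are graded submodules of `M`, and since the `M(e)` are independent,
`S ↦ ⊕_{e ∈ S} M(e)` embeds the power set of the support; a power set satisfying either chain
condition has a finite ground set.
-/

instance Pi.wellFoundedGT {ι : Type*} {α : ι → Type*} [Finite ι] [∀ i, Preorder (α i)]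
    [∀ i, WellFoundedGT (α i)] : WellFoundedGT (∀ i, α i) :=
  Pi.wellFoundedLT (α := fun i => (α i)ᵒᵈ)

theorem iSupIndep_set_singleton (ι : Type*) : iSupIndep fun i : ι => ({i} : Set ι) :=
  iSupIndep_iff_pairwiseDisjoint.2 fun _ _ h => Set.disjoint_singleton.2 h

theorem Finite.of_wellFoundedGT_set (ι : Type*) [WellFoundedGT (Set ι)] : Finite ι :=
  WellFoundedGT.finite_of_iSupIndep (iSupIndep_set_singleton ι) fun _ => Set.singleton_ne_empty _

theorem Finite.of_wellFoundedLT_set (ι : Type*) [WellFoundedLT (Set ι)] : Finite ι :=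
  WellFoundedLT.finite_of_iSupIndep (iSupIndep_set_singleton ι) fun _ => Set.singleton_ne_empty _

theorem iSupIndep.biSup_le_biSup_iff {ι α : Type*} [CompleteLattice α] {t : ι → α}
    (ht : iSupIndep t) (hne : ∀ i, t i ≠ ⊥) {s s' : Set ι} :
    ⨆ i ∈ s, t i ≤ ⨆ i ∈ s', t i ↔ s ⊆ s' := by
  refine ⟨fun h i hi => ?_, fun h => biSup_mono h⟩
  by_contra hi'
  exact hne i ((ht.disjoint_biSup hi').eq_bot_of_le ((le_biSup t hi).trans h))

theorem iSupIndep.strictMono_biSup {ι α : Type*} [CompleteLattice α] {t : ι → α}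
    (ht : iSupIndep t) (hne : ∀ i, t i ≠ ⊥) : StrictMono fun s : Set ι => ⨆ i ∈ s, t i :=
  strictMono_of_le_iff_le fun _ _ => (ht.biSup_le_biSup_iff hne).symm

namespace GModData

variable {R M : Type u} [AddCommGroup M] (ℳ : GModData Γ R M)

abbrev GrSub : Type u := {N : AddSubgroup M // ℳ.IsGrSub N}

theorem grNoetherian_iff_wellFoundedGT : ℳ.GrNoetherian ↔ WellFoundedGT ℳ.GrSub := by
  refine ⟨fun h => ?_, fun _ ⟨c, hc, hlt⟩ => ?_⟩
  · rw [WellFoundedGT, isWellFounded_iff, RelEmbedding.wellFounded_iff_isEmpty]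
    exact ⟨fun f => h ⟨fun n => (f n).1, fun n => (f n).2,
      fun n => f.map_rel_iff.2 n.lt_succ_self⟩⟩
  · exact not_strictMono_of_wellFoundedGT (fun n => (⟨c n, hc n⟩ : ℳ.GrSub))
      (strictMono_nat_of_lt_succ hlt)

theorem grArtinian_iff_wellFoundedLT : ℳ.GrArtinian ↔ WellFoundedLT ℳ.GrSub := by
  refine ⟨fun h => ?_, fun _ ⟨c, hc, hlt⟩ => ?_⟩
  · rw [WellFoundedLT, isWellFounded_iff, RelEmbedding.wellFounded_iff_isEmpty]
    exact ⟨fun f => h ⟨fun n => (f n).1, fun n => (f n).2,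
      fun n => f.map_rel_iff.2 n.lt_succ_self⟩⟩
  · exact not_strictAnti_of_wellFoundedLT (fun n => (⟨c n, hc n⟩ : ℳ.GrSub))
      (strictAnti_nat_of_succ_lt hlt)

theorem component_le_part {a b : Γ} (γ : a ⟶ b) : ℳ.component γ ≤ ℳ.part b :=
  le_iSup₂ (f := fun (f : Γ) (δ : f ⟶ b) => ℳ.component δ) a γ

theorem IsGrSub.eq_iSup_inf_part {N : AddSubgroup M} (hN : ℳ.IsGrSub N) :
    N = ⨆ e, N ⊓ ℳ.part e := by
  refine le_antisymm (fun x hx => (AddSubgroup.closure_le _).2 ?_ (hN.2 x hx))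
    (iSup_le fun e => inf_le_left)
  rintro y ⟨hy, a, b, γ, hyγ⟩
  exact le_iSup (fun e => N ⊓ ℳ.part e) b ⟨hy, ℳ.component_le_part γ hyγ⟩

theorem isGrSub_restrict_iff {P : AddSubgroup M} (hP : ∀ m ∈ P, ∀ a, ℳ.smul m a ∈ P)
    {N : AddSubgroup P} : (ℳ.restrict P).IsGrSub N ↔ ℳ.IsGrSub (N.map P.subtype) := by
  have hsmul (m : P) (a : R) : (ℳ.restrict P).smul m a = ⟨ℳ.smul m a, hP m m.2 a⟩ :=
    dif_pos _
  have hclosure : (AddSubgroup.closure {w | w ∈ N ∧ (ℳ.restrict P).IsHomogeneous w}).map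
      P.subtype = AddSubgroup.closure {x | x ∈ N.map P.subtype ∧ ℳ.IsHomogeneous x} := by
    rw [AddMonoidHom.map_closure]
    congr 1
    ext x
    constructor
    · rintro ⟨w, ⟨hw, hh⟩, rfl⟩
      exact ⟨⟨w, hw, rfl⟩, hh⟩
    · rintro ⟨⟨w, hw, rfl⟩, hh⟩
      exact ⟨w, ⟨hw, hh⟩, rfl⟩
  refine and_congr ⟨?_, ?_⟩ ?_
  · rintro h _ ⟨m, hm, rfl⟩ a
    exact ⟨_, h m hm a, by rw [hsmul]; rfl⟩
  · rintro h m hm a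
    obtain ⟨y, hy, hya⟩ := h _ ⟨m, hm, rfl⟩ a
    rw [hsmul]
    exact (Subtype.ext hya : y = ⟨ℳ.smul m a, hP m m.2 a⟩) ▸ hy
  · change N ≤ _ ↔ N.map P.subtype ≤ _
    rw [← hclosure, AddSubgroup.map_le_map_iff_of_injective P.subtype_injective]

namespace IsGraded

variable [AddCommGroup R] {𝒜 : GRingData Γ R} {ℳ} (hℳ : ℳ.IsGraded 𝒜)
include hℳ

def smulHom (a : R) : M →+ M :=
  AddMonoidHom.mk' (ℳ.smul · a) (hℳ.add_smul · · a)

theorem isGrSub_iSup {ι : Sort*} {N : ι → AddSubgroup M} (hN : ∀ i, ℳ.IsGrSub (N i)) :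
    ℳ.IsGrSub (⨆ i, N i) := by
  refine ⟨fun m hm a => ?_, fun n hn => ?_⟩
  · have hsub : (⨆ i, N i) ≤ (⨆ i, N i).comap (hℳ.smulHom a) :=
      iSup_le fun i x hx => AddSubgroup.mem_comap.2 (le_iSup N i ((hN i).1 x hx a))
    exact hsub hm
  · have hsub : (⨆ i, N i) ≤ AddSubgroup.closure {x | x ∈ ⨆ i, N i ∧ ℳ.IsHomogeneous x} := by
      refine iSup_le fun i y hy => AddSubgroup.closure_mono ?_ ((hN i).2 y hy)
      exact fun z hz => ⟨le_iSup N i hz.1, hz.2⟩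
    exact hsub hn

open scoped Classical in
theorem isInternal_component : DirectSum.IsInternal fun γ : GrIdx Γ => ℳ.component γ.2.2 := by
  refine ⟨(injective_iff_map_eq_zero _).2 fun f hf => ?_, fun x => ?_⟩
  · rw [DirectSum.coeAddMonoidHom_eq_dfinsuppSum] at hf
    refine DFinsupp.ext fun γ => ?_
    by_contra hγ
    exact hγ (Subtype.ext (hℳ.independent f.support (fun γ => f γ) (fun γ _ => (f γ).2) hf γ
      (DFinsupp.mem_support_iff.2 hγ)))
  · obtain ⟨s, cf, hcf, rfl⟩ := hℳ.decompose x
    exact ⟨∑ γ ∈ s.attach, DirectSum.of _ γ.1 ⟨cf γ, hcf γ γ.2⟩, by simp [Finset.sum_attach s cf]⟩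

open scoped Classical in
noncomputable def projPart (e : Γ) : M →+ M :=
  (DirectSum.toAddMonoid fun γ : GrIdx Γ =>
      if γ.2.1 = e then (ℳ.component γ.2.2).subtype else 0).comp
    (AddEquiv.ofBijective _ hℳ.isInternal_component).symm.toAddMonoidHom

open scoped Classical in
theorem projPart_of_mem {a b : Γ} {γ : a ⟶ b} {x : M} (hx : x ∈ ℳ.component γ) (e : Γ) :
    hℳ.projPart e x = if b = e then x else 0 := by
  have hdec : (AddEquiv.ofBijective _ hℳ.isInternal_component).symm x =
      DirectSum.of (fun γ : GrIdx Γ => ℳ.component γ.2.2) ⟨a, b, γ⟩ ⟨x, hx⟩ :=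
    (AddEquiv.symm_apply_eq _).2 (DirectSum.coeAddMonoidHom_of _ (⟨a, b, γ⟩ : GrIdx Γ) ⟨x, hx⟩).symm
  simp only [projPart, AddMonoidHom.comp_apply, AddEquiv.coe_toAddMonoidHom, hdec,
    DirectSum.toAddMonoid_of]
  split_ifs <;> rfl

theorem projPart_of_mem_part {e : Γ} {x : M} (hx : x ∈ ℳ.part e) : hℳ.projPart e x = x := by
  have hle : ℳ.part e ≤ AddMonoidHom.eqLocus (hℳ.projPart e) (AddMonoidHom.id M) :=
    iSup₂_le fun _ _ _ hy => (hℳ.projPart_of_mem hy e).trans (if_pos rfl)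
  exact hle hx

theorem part_le_ker_projPart {e f : Γ} (hne : f ≠ e) : ℳ.part f ≤ (hℳ.projPart e).ker :=
  iSup₂_le fun _ _ y hy => by simp [hℳ.projPart_of_mem hy, hne]

theorem iSupIndep_part : iSupIndep ℳ.part := by
  refine fun e => AddSubgroup.disjoint_def.2 fun {x} hxe hx => ?_
  have hle : (⨆ (f) (_ : f ≠ e), ℳ.part f) ≤ (hℳ.projPart e).ker :=
    iSup₂_le fun _ hf => hℳ.part_le_ker_projPart hf
  rw [← hℳ.projPart_of_mem_part hxe]
  exact hle hx

theorem smul_mem_part_of_mem (h𝒜 : 𝒜.IsObjectUnital) {f e : Γ} {γ : f ⟶ e} {m : M}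
    (hm : m ∈ ℳ.component γ) (a : R) : ℳ.smul m a ∈ ℳ.part e := by
  obtain ⟨t, cf, hcf, rfl⟩ := h𝒜.decompose a
  have hsum : ℳ.smul m (∑ τ ∈ t, cf τ) = ∑ τ ∈ t, ℳ.smul m (cf τ) :=
    map_sum (AddMonoidHom.mk' (ℳ.smul m) (hℳ.smul_add m)) cf t
  rw [hsum]
  refine sum_mem fun ⟨g, h, δ⟩ hδ => ?_
  by_cases hhf : h = f
  · subst hhf
    exact ℳ.component_le_part _ (hℳ.smul_mem γ δ hm (hcf _ hδ))
  · rw [hℳ.smul_eq_zero γ δ hhf hm (hcf _ hδ)]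
    exact zero_mem _

theorem isGrSub_part (h𝒜 : 𝒜.IsObjectUnital) (e : Γ) : ℳ.IsGrSub (ℳ.part e) := by
  refine ⟨fun m hm a => ?_, fun n hn => ?_⟩
  · have hle : ℳ.part e ≤ (ℳ.part e).comap (hℳ.smulHom a) :=
      iSup₂_le fun _ _ _ hy => hℳ.smul_mem_part_of_mem h𝒜 hy a
    exact hle hm
  · have hle : ℳ.part e ≤ AddSubgroup.closure {x | x ∈ ℳ.part e ∧ ℳ.IsHomogeneous x} :=
      iSup₂_le fun f γ _ hy => AddSubgroup.subset_closure ⟨ℳ.component_le_part γ hy, f, e, γ, hy⟩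
    exact hle hn

theorem isGrSub_inf_part (h𝒜 : 𝒜.IsObjectUnital) {N : AddSubgroup M} (hN : ℳ.IsGrSub N)
    (e : Γ) : ℳ.IsGrSub (N ⊓ ℳ.part e) := by
  refine ⟨fun m hm a => ⟨hN.1 m hm.1 a, (hℳ.isGrSub_part h𝒜 e).1 m hm.2 a⟩, fun x hx => ?_⟩
  have hmap : x ∈ (AddSubgroup.closure {y | y ∈ N ∧ ℳ.IsHomogeneous y}).map (hℳ.projPart e) :=
    hℳ.projPart_of_mem_part hx.2 ▸ AddSubgroup.mem_map_of_mem _ (hN.2 x hx.1)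
  rw [AddMonoidHom.map_closure] at hmap
  refine (AddSubgroup.closure_le _).2 ?_ hmap
  rintro _ ⟨y, ⟨hyN, a, b, γ, hy⟩, rfl⟩
  rw [SetLike.mem_coe, hℳ.projPart_of_mem hy]
  split_ifs with hb
  · subst hb
    exact AddSubgroup.subset_closure ⟨⟨hyN, ℳ.component_le_part γ hy⟩, a, b, γ, hy⟩
  · exact zero_mem _

variable (h𝒜 : 𝒜.IsObjectUnital)
include h𝒜

def grSubOfPart (e : Γ) (N : (ℳ.restrict (ℳ.part e)).GrSub) : ℳ.GrSub :=
  ⟨N.1.map (ℳ.part e).subtype, (ℳ.isGrSub_restrict_iff (hℳ.isGrSub_part h𝒜 e).1).1 N.2⟩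

/-- Only the nonzero summands are used, so that the product of the targets is finite when the
support is. -/
def grSubInfPart (N : ℳ.GrSub) (e : ℳ.partSupport) : (ℳ.restrict (ℳ.part e)).GrSub :=
  ⟨N.1.addSubgroupOf (ℳ.part e), (ℳ.isGrSub_restrict_iff (hℳ.isGrSub_part h𝒜 e).1).2 <| by
    rw [AddSubgroup.addSubgroupOf_map_subtype]
    exact hℳ.isGrSub_inf_part h𝒜 N.2 e⟩

def grSubOfSupport (S : Set ℳ.partSupport) : ℳ.GrSub :=
  ⟨⨆ e ∈ S, ℳ.part e, hℳ.isGrSub_iSup fun e => hℳ.isGrSub_iSup fun _ => hℳ.isGrSub_part h𝒜 e⟩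

theorem strictMono_grSubOfPart (e : Γ) : StrictMono (hℳ.grSubOfPart h𝒜 e) :=
  strictMono_of_le_iff_le fun _ _ =>
    (AddSubgroup.map_le_map_iff_of_injective (ℳ.part e).subtype_injective).symm

theorem strictMono_grSubInfPart : StrictMono (hℳ.grSubInfPart h𝒜) := by
  refine Monotone.strictMono_of_injective (fun N K h e => AddSubgroup.comap_mono h)
    fun N K hNK => Subtype.ext ?_
  have hinf (e : Γ) : N.1 ⊓ ℳ.part e = K.1 ⊓ ℳ.part e := by
    by_cases he : ℳ.part e = ⊥
    · rw [he, inf_bot_eq, inf_bot_eq]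
    · rw [← AddSubgroup.addSubgroupOf_map_subtype, ← AddSubgroup.addSubgroupOf_map_subtype]
      exact congrArg (fun L => AddSubgroup.map _ (Subtype.val L)) (congrFun hNK ⟨e, he⟩)
  rw [N.2.eq_iSup_inf_part, K.2.eq_iSup_inf_part]
  exact iSup_congr hinf

theorem strictMono_grSubOfSupport : StrictMono (hℳ.grSubOfSupport h𝒜) :=
  (hℳ.iSupIndep_part.comp Subtype.val_injective).strictMono_biSup fun e => e.2

end IsGraded

end GModData

/-- Let `R` be a `Γ`-graded ring and `M` a `Γ`-graded right
`R`-module. Then `M` is gr-noetherian (resp. gr-artinian) iff `M` is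
`Γ₀`-noetherian (resp. `Γ₀`-artinian) and `Γ'₀(M) = {e ∈ Γ₀ : M(e) ≠ 0}` is
finite. -/
theorem grNoetherian_iff_g0Noetherian_and_finite_support
    {Γ : Type u} [Groupoid.{u} Γ] {R : Type u} [AddCommGroup R] {M : Type u}
    [AddCommGroup M] (𝒜 : GRingData Γ R) (h𝒜 : 𝒜.IsObjectUnital)
    (ℳ : GModData Γ R M) (hℳ : ℳ.IsGraded 𝒜) :
    (ℳ.GrNoetherian ↔ ℳ.G0Noetherian ∧ ℳ.partSupport.Finite) ∧
    (ℳ.GrArtinian ↔ ℳ.G0Artinian ∧ ℳ.partSupport.Finite) := by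
  simp only [GModData.G0Noetherian, GModData.G0Artinian, GModData.grNoetherian_iff_wellFoundedGT,
    GModData.grArtinian_iff_wellFoundedLT, ← Set.finite_coe_iff]
  refine ⟨⟨fun _ => ⟨fun e => ?_, ?_⟩, fun ⟨_, _⟩ => ?_⟩,
    ⟨fun _ => ⟨fun e => ?_, ?_⟩, fun ⟨_, _⟩ => ?_⟩⟩
  · exact (hℳ.strictMono_grSubOfPart h𝒜 e).wellFoundedGT
  · have := (hℳ.strictMono_grSubOfSupport h𝒜).wellFoundedGT
    exact Finite.of_wellFoundedGT_set _
  · exact (hℳ.strictMono_grSubInfPart h𝒜).wellFoundedGT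
  · exact (hℳ.strictMono_grSubOfPart h𝒜 e).wellFoundedLT
  · have := (hℳ.strictMono_grSubOfSupport h𝒜).wellFoundedLT
    exact Finite.of_wellFoundedLT_set _
  · exact (hℳ.strictMono_grSubInfPart h𝒜).wellFoundedLT
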